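/- With q = |WST[E]| and m = |F|, the set MO-CR = EFF[⋂_{t=1}^q ⋃_{z∈F} C(y^t/z)] has cardinality at most (qm)^{d-1}. -/

import Mathlib

/-- Strict Pareto-dominance on `ℝᵈ`. -/
def ParetoDom {d : ℕ} (x y : Fin d → ℝ) : Prop :=
  (∀ k, y k ≤ x k) ∧ x ≠ y

/-- Pareto-efficient elements of a set. -/
def EFF {d : ℕ} (X : Set (Fin d → ℝ)) : Set (Fin d → ℝ) :=
  {y ∈ X | ∀ x ∈ X, ¬ ParetoDom x y}

/-- The cone of a nonnegative vector `x`: nonnegative vectors below `x`. -/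
def Cone {d : ℕ} (x : Fin d → ℝ) : Set (Fin d → ℝ) :=
  {ρ | (∀ k, 0 ≤ ρ k) ∧ ∀ k, ρ k ≤ x k}

/-!
Fix a coordinate `k` of an efficient point `x` of `⋂ₜ ⋃ₛ C(wₜₛ)` and, for every `t`, a cone
`C(w_{t,σ(t)})` containing `x`. Raising `x k` to `minₜ w_{t,σ(t)} k` keeps `x` in all these cones,
so efficiency forces `x k` to be that minimum: every coordinate of an efficient point takes one of
the `qm` values `w_{ts} k`. Efficient points form an antichain, so two of them that agree off the
last coordinate are comparable, hence equal; forgetting the last coordinate is therefore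
injective, and there are at most `(qm)^{d-1}` efficient points.
-/

open Finset

theorem paretoDom_iff_lt {d : ℕ} {x y : Fin d → ℝ} : ParetoDom x y ↔ y < x := by
  rw [ParetoDom, lt_iff_le_and_ne, Pi.le_def, ne_comm]

theorem EFF_eq_setOf_maximal {d : ℕ} (X : Set (Fin d → ℝ)) :
    EFF X = {y | Maximal (· ∈ X) y} := by
  ext y
  simp only [EFF, paretoDom_iff_lt, Set.mem_ofPred_eq, maximal_iff_forall_gt]
  exact and_congr_right fun _ => ⟨fun h x hyx hx => h x hx hyx, fun h x hx hyx => h hyx hx⟩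

theorem isAntichain_EFF {d : ℕ} (X : Set (Fin d → ℝ)) : IsAntichain (· ≤ ·) (EFF X) :=
  EFF_eq_setOf_maximal X ▸ setOfPred_maximal_antichain _

theorem eq_of_mem_EFF_of_update_mem {d : ℕ} {X : Set (Fin d → ℝ)} {x : Fin d → ℝ}
    (hx : x ∈ EFF X) {k : Fin d} {b : ℝ} (hb : x k ≤ b) (hX : Function.update x k b ∈ X) :
    x k = b := by
  rw [EFF_eq_setOf_maximal] at hx
  simpa using congrFun (hx.eq_of_ge hX (le_update_self_iff.2 hb)) k |>.symm

theorem update_mem_cone {d : ℕ} {w x : Fin d → ℝ} (hx : x ∈ Cone w) {k : Fin d} {b : ℝ}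
    (h0 : 0 ≤ b) (hb : b ≤ w k) : Function.update x k b ∈ Cone w := by
  refine ⟨fun j => ?_, fun j => ?_⟩ <;> rcases eq_or_ne j k with rfl | hj <;>
    simp_all [Function.update_of_ne, hx.1 j, hx.2 j]

theorem IsAntichain.injOn_init {α : Type*} [LinearOrder α] {n : ℕ} {s : Set (Fin (n + 1) → α)}
    (hs : IsAntichain (· ≤ ·) s) : s.InjOn Fin.init := by
  intro a ha b hb hab
  have hle {u v : Fin (n + 1) → α} (h : Fin.init u = Fin.init v)
      (hlast : u (Fin.last n) ≤ v (Fin.last n)) : u ≤ v := fun k =>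
    Fin.lastCases hlast (fun i => (congrFun h i).le) k
  rcases le_total (a (Fin.last n)) (b (Fin.last n)) with h | h
  · exact hs.eq ha hb (hle hab h)
  · exact (hs.eq hb ha (hle hab.symm h)).symm

theorem IsAntichain.ncard_le_pow {α : Type*} [LinearOrder α] {d M : ℕ} {s : Set (Fin d → α)}
    (hs : IsAntichain (· ≤ ·) s) (V : Fin d → Finset α) (hV : ∀ k, #(V k) ≤ M)
    (hsV : ∀ x ∈ s, ∀ k, x k ∈ V k) : s.ncard ≤ M ^ (d - 1) := by
  cases d with
  | zero => simpa using Set.ncard_le_one_of_subsingleton s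
  | succ e =>
    calc s.ncard = (Fin.init '' s).ncard := hs.injOn_init.ncard_image.symm
      _ ≤ #(Fintype.piFinset fun i : Fin e => V i.castSucc) := by
        rw [← Set.ncard_coe_finset]
        refine Set.ncard_le_ncard ?_ (finite_toSet _)
        rintro _ ⟨x, hx, rfl⟩
        simpa [Fin.init] using fun i => hsV x hx _
      _ ≤ M ^ e := by
        rw [Fintype.card_piFinset]
        exact (prod_le_pow_card _ _ _ fun i _ => hV _).trans_eq
          (by rw [card_univ, Fintype.card_fin])

theorem exists_eq_of_mem_EFF_iInter_iUnion_cone {d : ℕ} {ι κ : Type*} [Fintype ι] [Nonempty ι]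
    (w : ι → κ → Fin d → ℝ) {x : Fin d → ℝ} (hx : x ∈ EFF (⋂ t, ⋃ s, Cone (w t s))) (k : Fin d) :
    ∃ t s, x k = w t s k := by
  choose σ hσ using fun t => Set.mem_iUnion.1 (Set.mem_iInter.1 hx.1 t)
  set b := univ.inf' univ_nonempty fun t => w t (σ t) k
  have hxb : x k ≤ b := le_inf' _ _ fun t _ => (hσ t).2 k
  have hupdate : Function.update x k b ∈ ⋂ t, ⋃ s, Cone (w t s) :=
    Set.mem_iInter.2 fun t => Set.mem_iUnion.2
      ⟨σ t, update_mem_cone (hσ t) (((hσ t).1 k).trans hxb) (inf'_le _ (mem_univ t))⟩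
  obtain ⟨t, -, ht⟩ := exists_mem_eq_inf' univ_nonempty fun t => w t (σ t) k
  exact ⟨t, σ t, (eq_of_mem_EFF_of_update_mem hx hxb hupdate).trans ht⟩

theorem mocr_card_le_general {d q m : ℕ} (hq : 0 < q)
    (y : Fin q → Fin d → ℝ) (z : Fin m → Fin d → ℝ) :
    (EFF (⋂ t : Fin q, ⋃ s : Fin m, Cone (fun k => y t k / z s k))).ncard ≤
      (q * m) ^ (d - 1) := by
  have : Nonempty (Fin q) := ⟨⟨0, hq⟩⟩
  refine (isAntichain_EFF _).ncard_le_pow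
    (fun k => univ.image fun p : Fin q × Fin m => y p.1 k / z p.2 k)
    (fun k => card_image_le.trans (by simp)) fun x hx k => ?_
  obtain ⟨t, s, hts⟩ := exists_eq_of_mem_EFF_iInter_iUnion_cone _ hx k
  exact mem_image.2 ⟨(t, s), mem_univ _, hts.symm⟩

/-- The multi-objective coordination ratio
`MO-CR = EFF[⋂ₜ ⋃_z C(yᵗ/z)]` has at most `(qm)^{d-1}` elements. -/
theorem mocr_card_le {d q m : ℕ} (hd : 1 ≤ d) (hq : 0 < q) (hm : 0 < m)
    (y : Fin q → Fin d → ℝ) (z : Fin m → Fin d → ℝ)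
    (hy : ∀ t k, 0 ≤ y t k) (hz : ∀ s k, 0 < z s k) :
    (EFF (⋂ t : Fin q, ⋃ s : Fin m, Cone (fun k => y t k / z s k))).ncard ≤
      (q * m) ^ (d - 1) :=
  mocr_card_le_general hq y z
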